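/- arXiv:1802.09326 — 7 statements merged into one kernel-verified Lean document; each statement's English description precedes it below -/
import Mathlib

section
/- For every positive integer n, there exists a weakly 3-suitable family of permutations of [n] of cardinality at most ⌈log₂ log₂ n⌉ + 1 (for n ≥ 3; for n ≤ 2 a single permutation suffices). -/
/-- A family of strict orders is *3-suitable* if for every three distinct elements
`a b c` and distinguished element `a`, some order places `a` after both `b` and `c`. -/
def Fam3Suitable {X ι : Type*} (S : ι → X → X → Prop) : Prop :=
  ∀ a b c : X, a ≠ b → a ≠ c → b ≠ c → ∃ i, S i b a ∧ S i c a

/-- A family of strict orders is *weakly 3-suitable* if for every three distinct elements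
`a b c` and distinguished element `a`, some order places `a` after both `b` and `c`
or before both `b` and `c`. -/
def FamWeakly3Suitable {X ι : Type*} (S : ι → X → X → Prop) : Prop :=
  ∀ a b c : X, a ≠ b → a ≠ c → b ≠ c →
    ∃ i, (S i b a ∧ S i c a) ∨ (S i a b ∧ S i a c)

/-- Minimum cardinality of a weakly 3-suitable family of permutations of `[n]`. -/
noncomputable def permOmega (n : ℕ) : ℕ :=
  sInf {k | ∃ S : Fin k → Fin n → Fin n → Prop,
    (∀ i, IsStrictTotalOrder (Fin n) (S i)) ∧ FamWeakly3Suitable S}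

/-- Minimum cardinality of a 3-suitable family of permutations of `[n]`. -/
noncomputable def permAlpha (n : ℕ) : ℕ :=
  sInf {k | ∃ S : Fin k → Fin n → Fin n → Prop,
    (∀ i, IsStrictTotalOrder (Fin n) (S i)) ∧ Fam3Suitable S}

/-!
Encode the elements of `[n]` as numbers below `2 ^ L`, `L = ⌈log₂ n⌉`, and order them by
`x ↦ x ^^^ M` for a mask `M`. Two numbers `u ≠ v` compare according to the bit of `u ^^^ M` at
the most significant position where `u` and `v` differ. Hence, if `p` and `q` are those
positions for `a, b` and for `a, c`, then `a` is extreme among `a, b, c` in the order of `M` iff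
`a ^^^ M` has equal bits at `p` and `q`. The plain order settles this when `a` itself has equal
bits there; otherwise `p ≠ q`, so `p.testBit j ≠ q.testBit j` for some `j < ⌈log₂ L⌉`, and the
mask flipping exactly the positions whose `j`-th bit is set works.
-/

namespace Nat

theorem lt_iff_testBit_log2_xor {u v : ℕ} (h : u ≠ v) :
    v < u ↔ u.testBit (u ^^^ v).log2 = true := by
  have hne : u ^^^ v ≠ 0 := fun h0 => h (eq_of_xor_eq_zero h0)
  have hdiff : u.testBit (u ^^^ v).log2 ≠ v.testBit (u ^^^ v).log2 := by
    simpa [testBit_xor] using testBit_log2 hne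
  have hagree : ∀ j, (u ^^^ v).log2 < j → u.testBit j = v.testBit j := by
    intro j hj
    have : (u ^^^ v).testBit j = false :=
      testBit_lt_two_pow (lt_log2_self.trans_le (Nat.pow_le_pow_right two_pos hj))
    simpa [testBit_xor] using this
  constructor
  · intro hvu
    by_contra hu
    simp only [Bool.not_eq_true] at hu
    have hv : v.testBit (u ^^^ v).log2 = true := by simpa [hu] using hdiff.symm
    exact lt_asymm hvu (lt_of_testBit _ hu hv hagree)
  · intro hu
    have hv : v.testBit (u ^^^ v).log2 = false := by simpa [hu] using hdiff.symm
    exact lt_of_testBit _ hv hu fun j hj => (hagree j hj).symm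

theorem xor_lt_xor_iff_testBit_log2_xor {u v : ℕ} (h : u ≠ v) (M : ℕ) :
    v ^^^ M < u ^^^ M ↔ (u ^^^ M).testBit (u ^^^ v).log2 = true := by
  have hM : u ^^^ M ≠ v ^^^ M := fun h' => h (xor_left_injective h')
  rw [lt_iff_testBit_log2_xor hM, Nat.xor_comm v M, ← Nat.xor_assoc, Nat.xor_assoc u,
    Nat.xor_self, Nat.xor_zero]

theorem log2_xor_lt {u v L : ℕ} (h : u ≠ v) (hu : u < 2 ^ L) (hv : v < 2 ^ L) :
    (u ^^^ v).log2 < L :=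
  (log2_lt fun h0 => h (eq_of_xor_eq_zero h0)).2 (xor_lt_two_pow hu hv)

theorem exists_lt_testBit_ne {p q m : ℕ} (hp : p < 2 ^ m) (hq : q < 2 ^ m) (hpq : p ≠ q) :
    ∃ j < m, p.testBit j ≠ q.testBit j := by
  obtain ⟨j, hj⟩ := exists_testBit_ne_of_ne hpq
  refine ⟨j, ?_, hj⟩
  by_contra hjm
  have hle : 2 ^ m ≤ 2 ^ j := Nat.pow_le_pow_right two_pos (by omega)
  exact hj ((testBit_lt_two_pow (hp.trans_le hle)).trans
    (testBit_lt_two_pow (hq.trans_le hle)).symm)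

end Nat

theorem lt_and_lt_or_lt_and_lt_iff {α : Type*} [LinearOrder α] {a b c : α} (hab : a ≠ b)
    (hac : a ≠ c) : (b < a ∧ c < a) ∨ (a < b ∧ a < c) ↔ (b < a ↔ c < a) := by
  rcases hab.lt_or_gt with hab | hab <;> rcases hac.lt_or_gt with hac | hac <;>
    simp [hab, hac, hab.not_gt, hac.not_gt]

theorem famWeakly3Suitable_of_card_le_two {X ι : Type*} [Fintype X]
    (hX : Fintype.card X ≤ 2) (S : ι → X → X → Prop) : FamWeakly3Suitable S := by
  intro a b c hab hac hbc
  exact absurd (Fintype.two_lt_card_iff.2 ⟨a, b, c, hab, hac, hbc⟩) hX.not_gt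

theorem famWeakly3Suitable_xor {X ι : Type*} {f : X → ℕ} (hf : Function.Injective f) {L : ℕ}
    (hfL : ∀ x, f x < 2 ^ L) {M : ι → ℕ} (hM₀ : ∃ i, M i = 0)
    (hM : ∀ p < L, ∀ q < L, p ≠ q → ∃ i, (M i).testBit p ≠ (M i).testBit q) :
    FamWeakly3Suitable fun i x y => f x ^^^ M i < f y ^^^ M i := by
  intro a b c hab hac _
  have hab' : f a ≠ f b := hf.ne hab
  have hac' : f a ≠ f c := hf.ne hac
  set p := (f a ^^^ f b).log2
  set q := (f a ^^^ f c).log2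
  have extreme_iff : ∀ i,
      ((f b ^^^ M i < f a ^^^ M i ∧ f c ^^^ M i < f a ^^^ M i) ∨
        (f a ^^^ M i < f b ^^^ M i ∧ f a ^^^ M i < f c ^^^ M i)) ↔
      ((f a).testBit p ^^ (M i).testBit p) = ((f a).testBit q ^^ (M i).testBit q) := by
    intro i
    rw [lt_and_lt_or_lt_and_lt_iff (Nat.xor_left_injective.ne hab')
        (Nat.xor_left_injective.ne hac'), Nat.xor_lt_xor_iff_testBit_log2_xor hab',
      Nat.xor_lt_xor_iff_testBit_log2_xor hac', ← Bool.eq_iff_iff, Nat.testBit_xor,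
      Nat.testBit_xor]
  by_cases hbits : (f a).testBit p = (f a).testBit q
  · obtain ⟨i, hi⟩ := hM₀
    exact ⟨i, (extreme_iff i).2 (by simp [hi, hbits])⟩
  · have hpq : p ≠ q := fun h => hbits (congrArg _ h)
    obtain ⟨i, hi⟩ := hM p (Nat.log2_xor_lt hab' (hfL a) (hfL b)) q
      (Nat.log2_xor_lt hac' (hfL a) (hfL c)) hpq
    refine ⟨i, (extreme_iff i).2 ?_⟩
    revert hbits hi
    cases (f a).testBit p <;> cases (f a).testBit q <;> cases (M i).testBit p <;>
      cases (M i).testBit q <;> simp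

/-- Mask `0` gives the plain order; mask `j + 1` flips the positions `p < L` with `p.testBit j`. -/
def bitPositionMasks (L m : ℕ) : Fin (m + 1) → ℕ :=
  Fin.cons 0 fun j : Fin m => Nat.ofBits fun p : Fin L => (p : ℕ).testBit j

theorem bitPositionMasks_separate {L m : ℕ} (hL : L ≤ 2 ^ m) :
    ∀ p < L, ∀ q < L, p ≠ q →
      ∃ i, (bitPositionMasks L m i).testBit p ≠ (bitPositionMasks L m i).testBit q := by
  intro p hp q hq hpq
  obtain ⟨j, hj, hne⟩ := Nat.exists_lt_testBit_ne (hp.trans_le hL) (hq.trans_le hL) hpq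
  exact ⟨(⟨j, hj⟩ : Fin m).succ, by
    rwa [bitPositionMasks, Fin.cons_succ, Nat.testBit_ofBits_lt _ _ hp,
      Nat.testBit_ofBits_lt _ _ hq]⟩

theorem exists_weakly3Suitable_of_injective_lt_two_pow {X : Type*} {f : X → ℕ}
    (hf : Function.Injective f) {L m : ℕ} (hfL : ∀ x, f x < 2 ^ L) (hL : L ≤ 2 ^ m) :
    ∃ S : Fin (m + 1) → X → X → Prop,
      (∀ i, IsStrictTotalOrder X (S i)) ∧ FamWeakly3Suitable S :=
  ⟨fun i x y => f x ^^^ bitPositionMasks L m i < f y ^^^ bitPositionMasks L m i,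
    fun _ => (Nat.xor_left_injective.comp hf).isStrictTotalOrder_onFun (· < ·),
    famWeakly3Suitable_xor hf hfL ⟨0, rfl⟩ (bitPositionMasks_separate hL)⟩

/-- For every `n ≥ 3` there is a weakly 3-suitable family of permutations
(strict total orders) of `[n]` of cardinality at most `⌈log₂ log₂ n⌉ + 1`; for `1 ≤ n ≤ 2`
a single permutation suffices. -/
theorem weakly_3suitable_family_exists :
    (∀ n : ℕ, 3 ≤ n → ∃ k, k ≤ Nat.clog 2 (Nat.clog 2 n) + 1 ∧
      ∃ S : Fin k → Fin n → Fin n → Prop,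
        (∀ i, IsStrictTotalOrder (Fin n) (S i)) ∧ FamWeakly3Suitable S) ∧
    (∀ n : ℕ, 1 ≤ n → n ≤ 2 → ∃ S : Fin 1 → Fin n → Fin n → Prop,
        (∀ i, IsStrictTotalOrder (Fin n) (S i)) ∧ FamWeakly3Suitable S) := by
  refine ⟨fun n _ => ⟨_, le_rfl, ?_⟩, fun n _ hn => ?_⟩
  · exact exists_weakly3Suitable_of_injective_lt_two_pow Fin.val_injective
      (fun x => x.isLt.trans_le (Nat.le_pow_clog one_lt_two n)) (Nat.le_pow_clog one_lt_two _)
  · exact ⟨fun _ => (· < ·), fun _ => inferInstance,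
      famWeakly3Suitable_of_card_le_two (by simpa using hn) _⟩
end

section
/- For every positive integer n ≥ 3, there exists a 3-suitable family of permutations of [n] of cardinality at most 2⌈log₂ log₂ n⌉ + 2. -/
namespace Nat

theorem exists_highest_testBit_ne {x y L : ℕ} (hxy : x ≠ y) (hx : x < 2 ^ L) (hy : y < 2 ^ L) :
    ∃ i < L, x.testBit i ≠ y.testBit i ∧ ∀ j, i < j → x.testBit j = y.testBit j := by
  obtain ⟨i, hi, hhigh⟩ := exists_most_significant_bit (xor_eq_zero_iff.not.mpr hxy)
  have hne : x.testBit i ≠ y.testBit i := by simpa [testBit_xor] using hi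
  refine ⟨i, ?_, hne, fun j hj => by simpa [testBit_xor] using hhigh j hj⟩
  by_contra! hLi
  have hpow : 2 ^ L ≤ 2 ^ i := Nat.pow_le_pow_right two_pos hLi
  exact hne ((testBit_eq_false_of_lt (hx.trans_le hpow)).trans
    (testBit_eq_false_of_lt (hy.trans_le hpow)).symm)

theorem lt_iff_testBit_of_highest_ne {x y i : ℕ} (hi : x.testBit i ≠ y.testBit i)
    (hhigh : ∀ j, i < j → x.testBit j = y.testBit j) : x < y ↔ y.testBit i = true := by
  cases hy : y.testBit i
  · have hx : x.testBit i = true := by simpa [hy] using hi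
    simpa using (lt_of_testBit i hy hx fun j hj => (hhigh j hj).symm).le
  · have hx : x.testBit i = false := by simpa [hy] using hi
    simpa using lt_of_testBit i hx hy hhigh

theorem xor_lt_xor_iff_of_highest_ne {x y i : ℕ} (M : ℕ) (hi : x.testBit i ≠ y.testBit i)
    (hhigh : ∀ j, i < j → x.testBit j = y.testBit j) :
    x ^^^ M < y ^^^ M ↔ y.testBit i ≠ M.testBit i := by
  rw [lt_iff_testBit_of_highest_ne (by simpa [testBit_xor] using hi)
    fun j hj => by simp [testBit_xor, hhigh j hj], testBit_xor]
  cases y.testBit i <;> cases M.testBit i <;> decide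

end Nat

theorem Fam3Suitable.comp_surjective {X ι κ : Type*} {S : ι → X → X → Prop}
    (hS : Fam3Suitable S) {f : κ → ι} (hf : f.Surjective) : Fam3Suitable (S ∘ f) := by
  intro a b c hab hac hbc
  obtain ⟨i, hi⟩ := hS a b c hab hac hbc
  obtain ⟨j, rfl⟩ := hf i
  exact ⟨j, hi⟩

def bitPattern (t : ℕ) : Bool ⊕ (Fin t × Bool) → ℕ → Bool
  | .inl b => fun _ => b
  | .inr (j, β) => fun r => r.testBit j ^^ β

theorem exists_bitPattern_eq {t p q : ℕ} (hp : p < 2 ^ t) (hq : q < 2 ^ t) (u v : Bool)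
    (h : p = q → u = v) : ∃ s, bitPattern t s p = u ∧ bitPattern t s q = v := by
  by_cases huv : u = v
  · exact ⟨.inl u, rfl, huv⟩
  obtain ⟨j, hj, hne, -⟩ := Nat.exists_highest_testBit_ne (mt h huv) hp hq
  refine ⟨.inr (⟨j, hj⟩, p.testBit j ^^ u), ?_, ?_⟩ <;> simp only [bitPattern]
  · cases p.testBit j <;> cases u <;> rfl
  · revert hne huv
    cases p.testBit j <;> cases q.testBit j <;> cases u <;> cases v <;> decide

def xorOrder (n M : ℕ) (x y : Fin n) : Prop := x.val ^^^ M < y.val ^^^ M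

theorem isStrictTotalOrder_xorOrder (n M : ℕ) : IsStrictTotalOrder (Fin n) (xorOrder n M) :=
  ((xor_left_involutive M).injective.comp Fin.val_injective).isStrictTotalOrder_onFun _

theorem fam3Suitable_xorOrder_bitPattern {n L t : ℕ} (hn : n ≤ 2 ^ L) (hL : L ≤ 2 ^ t) :
    Fam3Suitable fun s => xorOrder n (Nat.ofBits fun r : Fin L => bitPattern t s r) := by
  intro a b c hab hac hbc
  have hlt (x : Fin n) : x.val < 2 ^ L := x.isLt.trans_le hn
  obtain ⟨p, hpL, hp, hp_high⟩ :=
    Nat.exists_highest_testBit_ne (Fin.val_ne_of_ne hab.symm) (hlt b) (hlt a)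
  obtain ⟨q, hqL, hq, hq_high⟩ :=
    Nat.exists_highest_testBit_ne (Fin.val_ne_of_ne hac.symm) (hlt c) (hlt a)
  obtain ⟨s, hsp, hsq⟩ := exists_bitPattern_eq (hpL.trans_le hL) (hqL.trans_le hL)
    (!a.val.testBit p) (!a.val.testBit q) (by rintro rfl; rfl)
  refine ⟨s, (Nat.xor_lt_xor_iff_of_highest_ne _ hp hp_high).2 ?_,
    (Nat.xor_lt_xor_iff_of_highest_ne _ hq hq_high).2 ?_⟩
  · simp [Nat.testBit_ofBits_lt _ _ hpL, hsp]
  · simp [Nat.testBit_ofBits_lt _ _ hqL, hsq]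

theorem suitable_family_exists_general (n : ℕ) :
    ∃ k, k ≤ 2 * Nat.clog 2 (Nat.clog 2 n) + 2 ∧
      ∃ S : Fin k → Fin n → Fin n → Prop,
        (∀ i, IsStrictTotalOrder (Fin n) (S i)) ∧ Fam3Suitable S := by
  set L := Nat.clog 2 n
  set t := Nat.clog 2 L
  let e := Fintype.equivFin (Bool ⊕ (Fin t × Bool))
  have hS := fam3Suitable_xorOrder_bitPattern (Nat.le_pow_clog one_lt_two n)
    (Nat.le_pow_clog one_lt_two L)
  exact ⟨_, by simp; omega, _, fun _ => isStrictTotalOrder_xorOrder n _,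
    hS.comp_surjective e.symm.surjective⟩

/-- For every `n ≥ 3` there exists a 3-suitable family of permutations
(strict total orders) of `[n]` of cardinality at most `2⌈log₂ log₂ n⌉ + 2`. -/
theorem suitable_family_exists (n : ℕ) (hn : 3 ≤ n) :
    ∃ k, k ≤ 2 * Nat.clog 2 (Nat.clog 2 n) + 2 ∧
      ∃ S : Fin k → Fin n → Fin n → Prop,
        (∀ i, IsStrictTotalOrder (Fin n) (S i)) ∧ Fam3Suitable S :=
  suitable_family_exists_general n
end

section
/- Let n = 2^(2^p) with p ≥ 1, and partition [n] into 2^(2^(p-1)) blocks each of size 2^(2^(p-1)). Given a weakly 3-suitable family {L_1, ..., L_p} of permutations of a set of size 2^(2^(p-1)), define permutations R_1, ..., R_p of [n] where R_i arranges the elements within each block according to L_i and arranges the blocks among themselves according to L_i, and define R_{p+1} from R_1 by reversing the order of elements within each block while keeping the block order. Then {R_1, ..., R_{p+1}} is a weakly 3-suitable family of permutations of [n]. -/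
/-!
Think of `[n]` as `m` blocks of size `m`. For three distinct points, if they lie in one block,
or in three different blocks, the weak 3-suitability of `L` on positions, respectively on blocks,
gives a lexicographic order `R_i` in which the distinguished point is extreme. If the
distinguished point is alone in its block, any lexicographic order puts it at an end. In the
remaining case the distinguished point `a` shares its block with `b` while `c` lies elsewhere:
both `R_1` and `R_{p+1}` place `a` and `b` on the same side of `c`, and exactly one of them
places `a` on the far side of `b`, since the two orders reverse each other inside a block.
-/

variable {X Y : Type*}

def Extremal (r : X → X → Prop) (a b c : X) : Prop :=
  (r b a ∧ r c a) ∨ (r a b ∧ r a c)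

theorem Extremal.swap {r : X → X → Prop} {a b c : X} (h : Extremal r a b c) :
    Extremal r a c b := by
  unfold Extremal at *
  tauto

theorem extremal_of_ne (r : X → X → Prop) [Std.Trichotomous r] {a b : X} (h : a ≠ b) :
    Extremal r a b b := by
  rcases _root_.trichotomous (r := r) a b with hab | hab | hab
  · exact .inr ⟨hab, hab⟩
  · exact absurd hab h
  · exact .inl ⟨hab, hab⟩

namespace Prod.Lex

variable {r : X → X → Prop} {s : Y → Y → Prop} {a b c : X × Y}

theorem extremal_of_fst (h : Extremal r a.1 b.1 c.1) : Extremal (Prod.Lex r s) a b c := by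
  rcases h with ⟨hb, hc⟩ | ⟨hb, hc⟩
  · exact .inl ⟨lex_iff.2 (.inl hb), lex_iff.2 (.inl hc)⟩
  · exact .inr ⟨lex_iff.2 (.inl hb), lex_iff.2 (.inl hc)⟩

theorem extremal_of_snd (hab : a.1 = b.1) (hac : a.1 = c.1) (h : Extremal s a.2 b.2 c.2) :
    Extremal (Prod.Lex r s) a b c := by
  rcases h with ⟨hb, hc⟩ | ⟨hb, hc⟩
  · exact .inl ⟨lex_iff.2 (.inr ⟨hab.symm, hb⟩), lex_iff.2 (.inr ⟨hac.symm, hc⟩)⟩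
  · exact .inr ⟨lex_iff.2 (.inr ⟨hab, hb⟩), lex_iff.2 (.inr ⟨hac, hc⟩)⟩

theorem extremal_or_extremal_flip [Std.Trichotomous r] [Std.Trichotomous s]
    (hab : a.1 = b.1) (hac : a.1 ≠ c.1) (hab₂ : a.2 ≠ b.2) :
    Extremal (Prod.Lex r s) a b c ∨ Extremal (Prod.Lex r (flip s)) a b c := by
  rcases _root_.trichotomous (r := r) a.1 c.1 with hc | hc | hc
  · rcases _root_.trichotomous (r := s) a.2 b.2 with hb | hb | hb
    · exact .inl (.inr ⟨lex_iff.2 (.inr ⟨hab, hb⟩), lex_iff.2 (.inl hc)⟩)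
    · exact absurd hb hab₂
    · exact .inr (.inr ⟨lex_iff.2 (.inr ⟨hab, hb⟩), lex_iff.2 (.inl hc)⟩)
  · exact absurd hc hac
  · rcases _root_.trichotomous (r := s) a.2 b.2 with hb | hb | hb
    · exact .inr (.inl ⟨lex_iff.2 (.inr ⟨hab.symm, hb⟩), lex_iff.2 (.inl hc)⟩)
    · exact absurd hb hab₂
    · exact .inl (.inl ⟨lex_iff.2 (.inr ⟨hab.symm, hb⟩), lex_iff.2 (.inl hc)⟩)

end Prod.Lex

theorem FamWeakly3Suitable.of_lex {ι κ : Type*} {L : ι → X → X → Prop}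
    (hL : FamWeakly3Suitable L) (i₀ : ι) [Std.Trichotomous (L i₀)]
    {R : κ → X × X → X × X → Prop} (hlex : ∀ i, ∃ j, R j = Prod.Lex (L i) (L i))
    (hflip : ∃ j, R j = Prod.Lex (L i₀) (flip (L i₀))) :
    FamWeakly3Suitable R := by
  have extremal_of_lex (i : ι) {a b c : X × X} (h : Extremal (Prod.Lex (L i) (L i)) a b c) :
      ∃ j, Extremal (R j) a b c :=
    let ⟨j, hj⟩ := hlex i; ⟨j, hj ▸ h⟩
  have two_in_block {a b c : X × X} (hab : a.1 = b.1) (hac : a.1 ≠ c.1) (hne : a ≠ b) :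
      ∃ j, Extremal (R j) a b c := by
    obtain ⟨j₀, hj₀⟩ := hflip
    have hab₂ : a.2 ≠ b.2 := fun h ↦ hne (Prod.ext hab h)
    rcases Prod.Lex.extremal_or_extremal_flip (r := L i₀) (s := L i₀) hab hac hab₂ with h | h
    · exact extremal_of_lex i₀ h
    · exact ⟨j₀, hj₀ ▸ h⟩
  intro a b c hab hac hbc
  by_cases h₁ : a.1 = b.1
  · by_cases h₂ : a.1 = c.1
    · obtain ⟨i, hi⟩ := hL a.2 b.2 c.2 (fun h ↦ hab (Prod.ext h₁ h))
        (fun h ↦ hac (Prod.ext h₂ h)) (fun h ↦ hbc (Prod.ext (h₁.symm.trans h₂) h))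
      exact extremal_of_lex i (Prod.Lex.extremal_of_snd h₁ h₂ hi)
    · exact two_in_block h₁ h₂ hab
  · by_cases h₂ : a.1 = c.1
    · obtain ⟨j, hj⟩ := two_in_block h₂ h₁ hac
      exact ⟨j, hj.swap⟩
    by_cases h₃ : b.1 = c.1
    · have h : Extremal (L i₀) a.1 b.1 c.1 := h₃ ▸ extremal_of_ne (L i₀) h₁
      exact extremal_of_lex i₀ (Prod.Lex.extremal_of_fst h)
    · obtain ⟨i, hi⟩ := hL a.1 b.1 c.1 h₁ h₂ h₃
      exact extremal_of_lex i (Prod.Lex.extremal_of_fst hi)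

theorem block_construction_weakly_3suitable_general (p : ℕ) (hp : 0 < p)
    (m : ℕ)
    (L : Fin p → Fin m → Fin m → Prop)
    (hL : ∀ i, IsStrictTotalOrder (Fin m) (L i))
    (hws : FamWeakly3Suitable L)
    (R : Fin (p + 1) → Fin m × Fin m → Fin m × Fin m → Prop)
    (hR : ∀ (i : Fin p) (x y : Fin m × Fin m),
      R i.castSucc x y ↔ (L i x.1 y.1 ∨ (x.1 = y.1 ∧ L i x.2 y.2)))
    (hRlast : ∀ x y : Fin m × Fin m,
      R (Fin.last p) x y ↔ (L ⟨0, hp⟩ x.1 y.1 ∨ (x.1 = y.1 ∧ L ⟨0, hp⟩ y.2 x.2))) :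
    FamWeakly3Suitable R := by
  have hlex (i : Fin p) : R i.castSucc = Prod.Lex (L i) (L i) := by
    ext x y
    rw [hR, Prod.lex_iff]
  have hflip : R (Fin.last p) = Prod.Lex (L ⟨0, hp⟩) (flip (L ⟨0, hp⟩)) := by
    ext x y
    rw [hRlast, Prod.lex_iff]
    rfl
  have := hL ⟨0, hp⟩
  exact hws.of_lex ⟨0, hp⟩ (fun i ↦ ⟨_, hlex i⟩) ⟨_, hflip⟩

/-- Let `n = 2^(2^p) = m * m` with `m = 2^(2^(p-1))`, `p ≥ 1`; identify
`[n]` with `Fin m × Fin m` (first coordinate = block, second = position within block).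
Given a weakly 3-suitable family `L_1, ..., L_p` of orders of a set of size `m`, the orders
`R_i` (blocks ordered by `L_i`, and within each block elements ordered by `L_i`) together
with `R_{p+1}` (obtained from `R_1` by reversing the order inside each block, keeping the
block order) form a weakly 3-suitable family of permutations of `[n]`. -/
theorem block_construction_weakly_3suitable (p : ℕ) (hp : 0 < p)
    (m : ℕ) (hm : m = 2 ^ 2 ^ (p - 1))
    (L : Fin p → Fin m → Fin m → Prop)
    (hL : ∀ i, IsStrictTotalOrder (Fin m) (L i))
    (hws : FamWeakly3Suitable L)
    (R : Fin (p + 1) → Fin m × Fin m → Fin m × Fin m → Prop)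
    (hR : ∀ (i : Fin p) (x y : Fin m × Fin m),
      R i.castSucc x y ↔ (L i x.1 y.1 ∨ (x.1 = y.1 ∧ L i x.2 y.2)))
    (hRlast : ∀ x y : Fin m × Fin m,
      R (Fin.last p) x y ↔ (L ⟨0, hp⟩ x.1 y.1 ∨ (x.1 = y.1 ∧ L ⟨0, hp⟩ y.2 x.2))) :
    FamWeakly3Suitable R :=
  block_construction_weakly_3suitable_general p hp m L hL hws R hR hRlast
end

section
/- Let T be a rooted tree and let D = {D_1, ..., D_s} be a weakly 3-suitable family of drawings of T. Then the family {D_1, ..., D_s, mirror(D_1), ..., mirror(D_s)}, where mirror(D) reverses the left-to-right order of children at every node, is a 3-suitable family of drawings of T. Consequently α(T) ≤ 2·ω(T). -/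
/-- A rooted tree: every vertex reaches the root by iterating `parent`. -/
structure RTree where
  V : Type
  root : V
  parent : V → V
  parent_root : parent root = root
  reach : ∀ v, ∃ k, parent^[k] v = root

/-- `u` is an ancestor of `v` (possibly `u = v`). -/
def RTree.Ancestor (T : RTree) (u v : T.V) : Prop :=
  ∃ k, T.parent^[k] v = u

/-- Two vertices are incomparable if neither is an ancestor of the other. -/
def RTree.Incomp (T : RTree) (u v : T.V) : Prop :=
  ¬ T.Ancestor u v ∧ ¬ T.Ancestor v u

/-- A strict total order on the vertices of a rooted tree is the preorder (DFS) traversal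
order of some drawing of the tree iff ancestors come first and every subtree forms an
interval; we take this characterization as the definition. -/
def IsTreeOrder (T : RTree) (ρ : T.V → T.V → Prop) : Prop :=
  IsStrictTotalOrder T.V ρ ∧
  (∀ u v, u ≠ v → T.Ancestor u v → ρ u v) ∧
  (∀ u v w, ρ u v → ρ v w → T.Ancestor u w → T.Ancestor u v)

/-- The preorder traversal order of the mirror image of a drawing: comparable pairs keep
their (ancestor-first) order, incomparable pairs are swapped. -/
def mirrorOrder (T : RTree) (ρ : T.V → T.V → Prop) : T.V → T.V → Prop :=
  fun u v => (u ≠ v ∧ T.Ancestor u v) ∨ (T.Incomp u v ∧ ρ v u)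

/-- A family of drawings (given by their preorder traversal orders) is *3-suitable* if for
any three pairwise incomparable vertices `a b c` and distinguished vertex `a`, some drawing's
preorder lists `a` after both `b` and `c`. -/
def TreeFam3Suitable (T : RTree) {ι : Type*} (D : ι → T.V → T.V → Prop) : Prop :=
  ∀ a b c : T.V, T.Incomp a b → T.Incomp a c → T.Incomp b c →
    ∃ i, D i b a ∧ D i c a

/-- A family of drawings is *weakly 3-suitable* if for any three pairwise incomparable
vertices `a b c` and distinguished vertex `a`, some drawing's preorder lists `a` after both
`b` and `c` or before both `b` and `c`. -/
def TreeFamWeakly3Suitable (T : RTree) {ι : Type*} (D : ι → T.V → T.V → Prop) : Prop :=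
  ∀ a b c : T.V, T.Incomp a b → T.Incomp a c → T.Incomp b c →
    ∃ i, (D i b a ∧ D i c a) ∨ (D i a b ∧ D i a c)

/-- Minimum cardinality of a weakly 3-suitable family of drawings of `T`. -/
noncomputable def treeOmega (T : RTree) : ℕ :=
  sInf {k | ∃ D : Fin k → T.V → T.V → Prop,
    (∀ i, IsTreeOrder T (D i)) ∧ TreeFamWeakly3Suitable T D}

/-- Minimum cardinality of a 3-suitable family of drawings of `T`. -/
noncomputable def treeAlpha (T : RTree) : ℕ :=
  sInf {k | ∃ D : Fin k → T.V → T.V → Prop,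
    (∀ i, IsTreeOrder T (D i)) ∧ TreeFam3Suitable T D}

/-- `S` is the vertex set of the (unique) simple path between `a` and `b` in the rooted
tree `T`: it goes from `a` up to the least common ancestor `m` and down to `b`. -/
def IsTreePath (T : RTree) (S : Set T.V) (a b : T.V) : Prop :=
  ∃ m, T.Ancestor m a ∧ T.Ancestor m b ∧
    (∀ m', T.Ancestor m' a → T.Ancestor m' b → T.Ancestor m' m) ∧
    S = {v | T.Ancestor m v ∧ (T.Ancestor v a ∨ T.Ancestor v b)}

/-- A containment model of the poset `X` by paths of the tree `T` (a CPT model). -/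
def CPTModel (T : RTree) {X : Type*} [PartialOrder X] (M : X → Set T.V) : Prop :=
  (∀ x, ∃ a b, IsTreePath T (M x) a b) ∧
  ∀ x y : X, x ≠ y → (x ≤ y ↔ M x ⊂ M y)

/-!
Mirroring a drawing reverses the preorder on incomparable vertices and keeps it on comparable
ones. So if some drawing lists `a` before both `b` and `c`, its mirror lists `a` after both;
hence a weakly 3-suitable family becomes 3-suitable once the mirrors are added. That the mirror
order is again a preorder traversal follows from the interval property: if `u` precedes the
incomparable vertex `w`, then so does every descendant of `u`. Applied to a minimum weakly
3-suitable family this gives `α(T) ≤ 2·ω(T)`; if there is no such family, there is no 3-suitable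
one either, and both `sInf`s are the junk value `0`.
-/

open Function

namespace RTree

variable {T : RTree} {u v w : T.V}

theorem Ancestor.refl (v : T.V) : T.Ancestor v v := ⟨0, rfl⟩

theorem Ancestor.trans (huv : T.Ancestor u v) (hvw : T.Ancestor v w) : T.Ancestor u w := by
  obtain ⟨k, rfl⟩ := huv
  obtain ⟨j, rfl⟩ := hvw
  exact ⟨k + j, iterate_add_apply _ _ _ _⟩

theorem eq_root_of_isPeriodicPt {p : ℕ} (hp : 0 < p) (hv : IsPeriodicPt T.parent p v) :
    v = T.root := by
  obtain ⟨n, hn⟩ := T.reach v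
  calc v = T.parent^[(p * n - n) + n] v := by
          rw [Nat.sub_add_cancel (Nat.le_mul_of_pos_left n hp)]; exact ((hv.mul_const n).eq).symm
    _ = T.root := by rw [iterate_add_apply, hn, iterate_fixed T.parent_root]

theorem Ancestor.antisymm (huv : T.Ancestor u v) (hvu : T.Ancestor v u) : u = v := by
  obtain ⟨k, rfl⟩ := huv
  obtain ⟨j, hj⟩ := hvu
  rcases Nat.eq_zero_or_pos k with rfl | hk
  · rfl
  have hv : v = T.root := eq_root_of_isPeriodicPt (p := j + k) (by omega) <| by
    rw [IsPeriodicPt, IsFixedPt, iterate_add_apply, hj]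
  rw [hv, iterate_fixed T.parent_root]

theorem Ancestor.total (huw : T.Ancestor u w) (hvw : T.Ancestor v w) :
    T.Ancestor u v ∨ T.Ancestor v u := by
  obtain ⟨k, rfl⟩ := huw
  obtain ⟨j, hj⟩ := hvw
  rcases le_total k j with h | h
  · right
    exact ⟨j - k, by rw [← iterate_add_apply, Nat.sub_add_cancel h, hj]⟩
  · left
    exact ⟨k - j, by rw [← hj, ← iterate_add_apply, Nat.sub_add_cancel h]⟩

theorem Incomp.symm (h : T.Incomp u v) : T.Incomp v u := ⟨h.2, h.1⟩

theorem Incomp.of_ancestor_right (h : T.Incomp u v) (hvw : T.Ancestor v w) : T.Incomp u w :=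
  ⟨fun huw => (huw.total hvw).elim h.1 h.2, fun hwu => h.2 (hvw.trans hwu)⟩

end RTree

namespace IsTreeOrder

variable {T : RTree} {ρ : T.V → T.V → Prop} {u v w : T.V}

theorem irrefl (h : IsTreeOrder T ρ) (u : T.V) : ¬ ρ u u := h.1.irrefl u

theorem trans (h : IsTreeOrder T ρ) (huv : ρ u v) (hvw : ρ v w) : ρ u w := h.1.trans u v w huv hvw

theorem asymm (h : IsTreeOrder T ρ) (huv : ρ u v) : ¬ ρ v u := fun hvu =>
  h.irrefl u (h.trans huv hvu)

theorem rel_or_rel_of_ne (h : IsTreeOrder T ρ) (huv : u ≠ v) : ρ u v ∨ ρ v u := by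
  by_contra! hn
  exact huv (h.1.trichotomous u v hn.1 hn.2)

theorem rel_of_ancestor_of_incomp (h : IsTreeOrder T ρ) (huw : ρ u w) (hinc : T.Incomp u w)
    (huv : T.Ancestor u v) : ρ v w := by
  have hvw : v ≠ w := by rintro rfl; exact hinc.1 huv
  exact (h.rel_or_rel_of_ne hvw).resolve_right fun hwv => hinc.1 (h.2.2 u w v huw hwv huv)

theorem mirrorOrder_trans (h : IsTreeOrder T ρ) (huv : mirrorOrder T ρ u v)
    (hvw : mirrorOrder T ρ v w) : mirrorOrder T ρ u w := by
  rcases huv with ⟨hne_uv, hanc_uv⟩ | ⟨hinc_uv, hvu⟩ <;>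
    rcases hvw with ⟨hne_vw, hanc_vw⟩ | ⟨hinc_vw, hwv⟩
  · refine Or.inl ⟨?_, hanc_uv.trans hanc_vw⟩
    rintro rfl
    exact hne_vw (hanc_vw.antisymm hanc_uv)
  · have hne_uw : u ≠ w := by rintro rfl; exact hinc_vw.2 hanc_uv
    by_cases hanc_uw : T.Ancestor u w
    · exact Or.inl ⟨hne_uw, hanc_uw⟩
    have hinc_uw : T.Incomp u w := ⟨hanc_uw, fun hwu => hinc_vw.2 (hwu.trans hanc_uv)⟩
    refine Or.inr ⟨hinc_uw, (h.rel_or_rel_of_ne hne_uw).resolve_left fun huw => ?_⟩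
    exact h.asymm hwv (h.rel_of_ancestor_of_incomp huw hinc_uw hanc_uv)
  · have hinc_uw := hinc_uv.of_ancestor_right hanc_vw
    exact Or.inr ⟨hinc_uw, h.rel_of_ancestor_of_incomp hvu hinc_uv.symm hanc_vw⟩
  · have hwu := h.trans hwv hvu
    by_cases hanc_uw : T.Ancestor u w
    · exact Or.inl ⟨by rintro rfl; exact h.irrefl u hwu, hanc_uw⟩
    refine Or.inr ⟨⟨hanc_uw, fun hanc_wu => h.asymm hvu ?_⟩, hwu⟩
    exact h.rel_of_ancestor_of_incomp hwv hinc_vw.symm hanc_wu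

theorem mirror (h : IsTreeOrder T ρ) : IsTreeOrder T (mirrorOrder T ρ) := by
  refine ⟨{ trichotomous := ?_, irrefl := ?_, trans := fun _ _ _ => h.mirrorOrder_trans },
    fun u v hne hanc => Or.inl ⟨hne, hanc⟩, ?_⟩
  · intro u v huv hvu
    by_contra hne
    by_cases hanc_uv : T.Ancestor u v
    · exact huv (Or.inl ⟨hne, hanc_uv⟩)
    by_cases hanc_vu : T.Ancestor v u
    · exact hvu (Or.inl ⟨Ne.symm hne, hanc_vu⟩)
    rcases h.rel_or_rel_of_ne hne with h' | h'
    · exact hvu (Or.inr ⟨⟨hanc_vu, hanc_uv⟩, h'⟩)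
    · exact huv (Or.inr ⟨⟨hanc_uv, hanc_vu⟩, h'⟩)
  · rintro u (⟨hne, -⟩ | ⟨hinc, -⟩)
    · exact hne rfl
    · exact hinc.1 (RTree.Ancestor.refl u)
  · rintro u v w (⟨-, hanc_uv⟩ | ⟨hinc_uv, hvu⟩) hvw hanc_uw
    · exact hanc_uv
    rcases hvw with ⟨-, hanc_vw⟩ | ⟨-, hwv⟩
    · exact ((hinc_uv.of_ancestor_right hanc_vw).1 hanc_uw).elim
    · have hwu := h.trans hwv hvu
      exact (h.asymm hwu (h.2.1 u w (by rintro rfl; exact h.irrefl u hwu) hanc_uw)).elim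

end IsTreeOrder

section Families

variable {T : RTree} {ι κ : Type*} {D : ι → T.V → T.V → Prop}

theorem TreeFam3Suitable.weakly3Suitable (h : TreeFam3Suitable T D) :
    TreeFamWeakly3Suitable T D := fun a b c hab hac hbc =>
  (h a b c hab hac hbc).imp fun _ => Or.inl

theorem TreeFam3Suitable.comp_equiv (h : TreeFam3Suitable T D) (e : κ ≃ ι) :
    TreeFam3Suitable T (fun j => D (e j)) := fun a b c hab hac hbc => by
  obtain ⟨i, hi⟩ := h a b c hab hac hbc
  exact ⟨e.symm i, by simpa using hi⟩

theorem TreeFamWeakly3Suitable.treeFam3Suitable_sum_elim_mirror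
    (h : TreeFamWeakly3Suitable T D) :
    TreeFam3Suitable T (Sum.elim D fun i => mirrorOrder T (D i)) := fun a b c hab hac hbc => by
  obtain ⟨i, hi | ⟨hab', hac'⟩⟩ := h a b c hab hac hbc
  · exact ⟨Sum.inl i, hi⟩
  · exact ⟨Sum.inr i, Or.inr ⟨hab.symm, hab'⟩, Or.inr ⟨hac.symm, hac'⟩⟩

theorem isTreeOrder_sum_elim_mirror (hD : ∀ i, IsTreeOrder T (D i)) :
    ∀ j, IsTreeOrder T (Sum.elim D (fun i => mirrorOrder T (D i)) j)
  | .inl i => hD i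
  | .inr i => (hD i).mirror

end Families

theorem Nat.sInf_le_apply_sInf_of_subset {A B : Set ℕ} (f : ℕ → ℕ) (hAB : A ⊆ B)
    (hf : ∀ k ∈ B, f k ∈ A) : sInf A ≤ f (sInf B) := by
  rcases B.eq_empty_or_nonempty with rfl | hB
  · simp [Set.subset_empty_iff.mp hAB]
  · exact Nat.sInf_le (hf _ (Nat.sInf_mem hB))

theorem treeAlpha_le_two_mul_treeOmega (T : RTree) : treeAlpha T ≤ 2 * treeOmega T := by
  refine Nat.sInf_le_apply_sInf_of_subset (2 * ·)
    (fun k ⟨D, hD, h3⟩ => ⟨D, hD, h3.weakly3Suitable⟩) ?_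
  rintro k ⟨D, hD, hws⟩
  let e : Fin (2 * k) ≃ Fin k ⊕ Fin k := (finCongr (two_mul k)).trans finSumFinEquiv.symm
  exact ⟨_, fun j => isTreeOrder_sum_elim_mirror hD (e j),
    hws.treeFam3Suitable_sum_elim_mirror.comp_equiv e⟩

/-- If `D_1, ..., D_s` is a weakly 3-suitable family of drawings of a
rooted tree `T` (drawings given by their preorder traversal orders), then together with
their mirror images they form a 3-suitable family of drawings of `T`; consequently
`α(T) ≤ 2·ω(T)`. -/
theorem mirror_family_3suitable (T : RTree) (s : ℕ)
    (D : Fin s → T.V → T.V → Prop)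
    (hD : ∀ i, IsTreeOrder T (D i))
    (hws : TreeFamWeakly3Suitable T D) :
    (∀ j : Fin s ⊕ Fin s,
        IsTreeOrder T (Sum.elim D (fun i => mirrorOrder T (D i)) j)) ∧
    TreeFam3Suitable T (Sum.elim D (fun i => mirrorOrder T (D i))) ∧
    treeAlpha T ≤ 2 * treeOmega T :=
  ⟨isTreeOrder_sum_elim_mirror hD, hws.treeFam3Suitable_sum_elim_mirror,
    treeAlpha_le_two_mul_treeOmega T⟩
end

section
/- Let P be a poset admitting a containment model by paths in a rooted tree T, and let L be the linear order on the elements of P obtained from a preorder traversal λ of a drawing of T by ordering x_i before x_j whenever the last-listed vertex of the path P_i appears before the last-listed vertex of P_j in λ, breaking ties (equal last vertices) by path length |P_i| < |P_j|, and arbitrarily otherwise. Then L is a linear extension of P. -/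
lemma RTree.root_fixed (T : RTree) (n : ℕ) : T.parent^[n] T.root = T.root := by
  induction n with
  | zero => rfl
  | succ n ih => rw [Function.iterate_succ_apply', ih, T.parent_root]

lemma RTree.ancestors_finite (T : RTree) (a : T.V) :
    Set.Finite {v | T.Ancestor v a} := by
  obtain ⟨k, hk⟩ := T.reach a
  apply Set.Finite.subset ((Set.finite_Iic k).image (fun i => T.parent^[i] a))
  rintro v ⟨i, rfl⟩
  by_cases hi : i ≤ k
  · exact ⟨i, hi, rfl⟩
  · refine ⟨k, Set.mem_Iic.mpr le_rfl, ?_⟩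
    have : T.parent^[i] a = T.parent^[i - k] (T.parent^[k] a) := by
      rw [← Function.iterate_add_apply]
      congr 1; omega
    rw [this, hk, T.root_fixed]; exact hk

lemma path_finite (T : RTree) (S : Set T.V) (a b : T.V) (h : IsTreePath T S a b) :
    S.Finite := by
  obtain ⟨m, _, _, _, rfl⟩ := h
  apply Set.Finite.subset ((T.ancestors_finite a).union (T.ancestors_finite b))
  rintro v ⟨_, h | h⟩
  · exact Or.inl h
  · exact Or.inr h

/-- Let a poset `X` have a containment model by paths in a rooted tree
`T`, let `ρ` be the preorder traversal order of a drawing of `T`, and for each element `x`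
let `lv x` be the vertex of its path `M x` listed last by `ρ`. Any strict total order `L`
on `X` that puts `x` before `y` whenever `lv x` is listed before `lv y`, and whenever
`lv x = lv y` and the path of `x` is shorter than that of `y`, is a linear extension of
the partial order. -/
theorem traversal_order_is_linear_extension (T : RTree) {X : Type} [PartialOrder X]
    (M : X → Set T.V) (hM : CPTModel T M)
    (ρ : T.V → T.V → Prop) (hρ : IsTreeOrder T ρ)
    (lv : X → T.V)
    (hlv : ∀ x, lv x ∈ M x ∧ ∀ u ∈ M x, u ≠ lv x → ρ u (lv x))
    (L : X → X → Prop) (hL : IsStrictTotalOrder X L)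
    (h1 : ∀ x y : X, ρ (lv x) (lv y) → L x y)
    (h2 : ∀ x y : X, lv x = lv y → (M x).ncard < (M y).ncard → L x y) :
    ∀ x y : X, x < y → L x y := by
  intro x y hxy
  have hne : x ≠ y := ne_of_lt hxy
  have hss : M x ⊂ M y := (hM.2 x y hne).mp (le_of_lt hxy)
  have hmem : lv x ∈ M y := hss.subset (hlv x).1
  by_cases heq : lv x = lv y
  · apply h2 x y heq
    obtain ⟨a, b, hp⟩ := hM.1 y
    exact Set.ncard_lt_ncard hss (path_finite T (M y) a b hp)
  · exact h1 x y ((hlv y).2 (lv x) hmem heq)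
end

section
/- If a poset P admits a containment model by paths in a host tree T with maximum degree Δ ≥ 2, radius r ≥ 1, and at most l leaf nodes, then dim(P) ≤ min(l, 2⌈log₂ log₂ Δ⌉ + 2⌈log₂ r⌉ + 3). -/
/-- A containment model of the poset `X` by paths of the graph `G`. -/
def GraphCPTModel {V : Type*} (G : SimpleGraph V) {X : Type*} [PartialOrder X]
    (M : X → Set V) : Prop :=
  (∀ x, ∃ (u v : V) (p : G.Walk u v), p.IsPath ∧ M x = {w | w ∈ p.support}) ∧
  ∀ x y : X, x ≠ y → (x ≤ y ↔ M x ⊂ M y)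

/-- The radius of a graph: the least possible eccentricity of a vertex. -/
noncomputable def graphRadius {V : Type*} (G : SimpleGraph V) : ℕ :=
  sInf {e | ∃ c : V, ∀ v, G.dist c v ≤ e}

/-- `L` is a (non-strict) linear order relation on `X`. -/
def IsLinearOrderRel {X : Type*} (L : X → X → Prop) : Prop :=
  (∀ a, L a a) ∧ (∀ a b, L a b → L b a → a = b) ∧
  (∀ a b c, L a b → L b c → L a c) ∧ (∀ a b, L a b ∨ L b a)

/-- The poset `X` has dimension at most `k`: there are `k` linear extensions of the order
whose intersection is the order. -/
def DimLE (X : Type*) [PartialOrder X] (k : ℕ) : Prop :=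
  ∃ L : Fin k → X → X → Prop,
    (∀ i, IsLinearOrderRel (L i)) ∧ ∀ a b : X, a ≤ b ↔ ∀ i, L i a b

/-- The dimension of the poset `X`. -/
noncomputable def posetDim (X : Type*) [PartialOrder X] : ℕ :=
  sInf {k | DimLE X k}

/-!
In a tree the path between `a` and `b` is the geodesic interval `I(a, b)`. Suppose vertex
weights `φ i` are such that every vertex `e ∉ I(a, b)` is heavier, for some `i`, than all of
`I(a, b)`. Then sorting the elements of the poset by the largest `φ i`-weight on their path, ties
broken by a linear extension of inclusion, gives one linear extension per weight, and these
realize the order.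

For the bound `l`, take the distances to the leaves: some leaf is strictly closer to `e` than
to all of `I(a, b)`. For the logarithmic bound, root the tree at a centre `c` and give each vertex
its index `< Δ ≤ 2 ^ m` among the neighbours of its parent; the code of a vertex is the sequence
of these indices along its root path, `m` bits each, so it has at most `m r` letters. The distance
to `c` handles an `e` that is an ancestor of `a` or `b`. Otherwise the code of `e` first differs
from those of `a` and of `b` at letters of `e`, and comparing codes lexicographically, with each
letter scored by agreement with a test word, puts `e` above both ends, hence above the whole
interval, once the test word agrees with `e` at those two positions. Such a test word is found
among the two constant words and the `⌈log₂ m⌉ + ⌈log₂ r⌉` bits of the position and their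
negations.
-/

open Function Finset

theorem IsLinearOrderRel.of_injective {X γ : Type*} [LinearOrder γ] {g : X → γ}
    (hg : Injective g) : IsLinearOrderRel fun a b => g a ≤ g b :=
  ⟨fun _ => le_rfl, fun _ _ h₁ h₂ => hg (le_antisymm h₁ h₂), fun _ _ _ => le_trans,
    fun _ _ => le_total _ _⟩

theorem DimLE.mono {X : Type*} [PartialOrder X] {k k' : ℕ} (h : DimLE X k) (hk : 0 < k)
    (hkk' : k ≤ k') : DimLE X k' := by
  obtain ⟨L, hL, hiff⟩ := h
  refine ⟨fun i => L (if hi : (i : ℕ) < k then ⟨i, hi⟩ else ⟨0, hk⟩), fun i => hL _,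
    fun a b => (hiff a b).trans ⟨fun hab i => hab _, fun hab i => ?_⟩⟩
  simpa using hab (Fin.castLE hkk' i)

section SortKey

variable {X α β γ : Type*} [PartialOrder α]

noncomputable def sortKey (f : α → β) (M : X → α) (tie : X → γ) (x : X) :
    β ×ₗ LinearExtension α ×ₗ γ :=
  toLex (f (M x), toLex (toLinearExtension (M x), tie x))

variable {f : α → β} {M : X → α} {tie : X → γ} {a b : X}

theorem sortKey_injective (h : Injective tie) : Injective (sortKey f M tie) :=
  fun _ _ hab => h (congrArg (fun k => (ofLex (ofLex k).2).2) hab)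

variable [LinearOrder β] [LinearOrder γ]

theorem sortKey_lt_sortKey (hf : Monotone f) (h : M a < M b) :
    sortKey f M tie a < sortKey f M tie b := by
  refine Prod.Lex.toLex_lt_toLex'.2 ⟨hf h.le, fun _ => Prod.Lex.toLex_lt_toLex.2 (Or.inl ?_)⟩
  exact lt_of_le_of_ne (toLinearExtension.monotone h.le) h.ne

theorem le_of_sortKey_le (h : sortKey f M tie a ≤ sortKey f M tie b) : f (M a) ≤ f (M b) :=
  (Prod.Lex.toLex_le_toLex'.1 h).1

theorem sortKey_le_sortKey_iff_of_eq (h : M a = M b) :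
    sortKey f M tie a ≤ sortKey f M tie b ↔ tie a ≤ tie b := by
  simp [sortKey, h, Prod.Lex.toLex_le_toLex]

end SortKey

theorem dimLE_of_separating {X α β : Type*} [PartialOrder X] [PartialOrder α] [LinearOrder β]
    {M : X → α} (hM : ∀ x y, x ≠ y → (x ≤ y ↔ M x < M y)) {k : ℕ} (hk : 2 ≤ k)
    {f : Fin k → α → β} (hf : ∀ i, Monotone (f i))
    (hsep : ∀ x y, ¬ M x ≤ M y → ∃ i, f i (M y) < f i (M x)) : DimLE X k := by
  classical
  set e : X → Cardinal := ⇑embeddingToCardinal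
  -- elements with equal `M` are incomparable, so two of the extensions must order them oppositely
  let L : Fin k → X → X → Prop := fun i a b =>
    if (i : ℕ) = 0 then
      sortKey (f i) M (OrderDual.toDual ∘ e) a ≤ sortKey (f i) M (OrderDual.toDual ∘ e) b
    else sortKey (f i) M e a ≤ sortKey (f i) M e b
  have he : Injective e := embeddingToCardinal.injective
  refine ⟨L, fun i => ?_, fun a b => ⟨fun hab i => ?_, fun hab => ?_⟩⟩
  · by_cases hi : (i : ℕ) = 0
    · simpa [L, hi] using IsLinearOrderRel.of_injective (sortKey_injective (f := f i) (M := M)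
        (OrderDual.toDual.injective.comp he))
    · simpa [L, hi] using IsLinearOrderRel.of_injective (sortKey_injective (f := f i) (M := M) he)
  · obtain rfl | hne := eq_or_ne a b
    · dsimp only [L]; split_ifs <;> exact le_rfl
    · have hlt := (hM a b hne).1 hab
      dsimp only [L]; split_ifs <;> exact (sortKey_lt_sortKey (hf i) hlt).le
  · have hf_le : ∀ i, f i (M a) ≤ f i (M b) := fun i => by
      have := hab i
      dsimp only [L] at this; split_ifs at this <;> exact le_of_sortKey_le this
    have hMab : M a ≤ M b := by
      by_contra h
      obtain ⟨i, hi⟩ := hsep a b h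
      exact (hf_le i).not_gt hi
    obtain hlt | heq := hMab.lt_or_eq
    · obtain rfl | hne := eq_or_ne a b
      · exact le_rfl
      · exact (hM a b hne).2 hlt
    · have h₀ := hab ⟨0, by omega⟩
      have h₁ := hab ⟨1, by omega⟩
      simp only [L, if_pos, if_neg one_ne_zero, sortKey_le_sortKey_iff_of_eq heq] at h₀ h₁
      exact (he (le_antisymm h₁ h₀)).le

namespace Finset

variable {ι β : Type*} [LinearOrder β] {s : Finset ι} {φ : ι → β} {a b : ι}

theorem card_filter_lt_lt_card (ha : a ∈ s) : #{x ∈ s | φ x < φ a} < #s :=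
  card_lt_card (filter_ssubset.2 ⟨a, ha, lt_irrefl _⟩)

theorem filter_lt_subset_filter_lt (h : φ a ≤ φ b) :
    {x ∈ s | φ x < φ a} ⊆ {x ∈ s | φ x < φ b} := fun x hx => by
  simp only [mem_filter] at hx ⊢
  exact ⟨hx.1, hx.2.trans_le h⟩

theorem card_filter_lt_lt_card_filter_lt (ha : a ∈ s) (h : φ a < φ b) :
    #{x ∈ s | φ x < φ a} < #{x ∈ s | φ x < φ b} :=
  card_lt_card ((ssubset_iff_of_subset (filter_lt_subset_filter_lt h.le)).2
    ⟨a, by simp [ha, h], by simp⟩)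

end Finset

section Rank

variable {ι β : Type*} [Fintype ι] [LinearOrder β] {φ : ι → β} {a b : ι}

def rank (φ : ι → β) (a : ι) : ℕ :=
  #{x | φ x < φ a}

theorem rank_le_rank (h : φ a ≤ φ b) : rank φ a ≤ rank φ b :=
  card_le_card (filter_lt_subset_filter_lt h)

theorem rank_lt_rank_iff : rank φ a < rank φ b ↔ φ a < φ b :=
  ⟨fun h => not_le.1 fun h' => h.not_ge (rank_le_rank h'),
    card_filter_lt_lt_card_filter_lt (mem_univ a)⟩

end Rank

section Score

variable {D : ℕ → Bool} {s s' : ℕ → Option Bool} {q : ℕ}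

def score (D : ℕ → Bool) (s : ℕ → Option Bool) : Lex (ℕ → ℕ) :=
  toLex fun q => (s q).elim 0 fun b => if b = D q then 2 else 1

theorem score_apply (D : ℕ → Bool) (s : ℕ → Option Bool) (q : ℕ) :
    score D s q = (s q).elim 0 fun b => if b = D q then 2 else 1 :=
  rfl

theorem score_le_score (h : ∀ q b, s q = some b → s' q = some b) : score D s ≤ score D s' :=
  Pi.toLex_monotone fun q => by
    cases hq : s q with
    | none => simp
    | some b => simp [h q b hq]

theorem score_lt_score (hpre : ∀ p < q, s p = s' p) (hq : s' q = some (D q))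
    (hq' : s q ≠ some (D q)) : score D s < score D s' := by
  refine ⟨q, fun p hp => by rw [score_apply, score_apply, hpre p hp], ?_⟩
  rw [score_apply, score_apply, hq]
  cases h : s q with
  | none => simp
  | some b => simp [show b ≠ D q from fun hb => hq' (h ▸ hb ▸ rfl)]

end Score

def bitTest (B : ℕ) : Bool ⊕ Fin B × Bool → ℕ → Bool
  | .inl b, _ => b
  | .inr (j, ε), q => q.testBit j ^^ ε

theorem exists_bitTest_eq {B q₁ q₂ : ℕ} (g : ℕ → Bool) (h₁ : q₁ < 2 ^ B) (h₂ : q₂ < 2 ^ B) :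
    ∃ i, bitTest B i q₁ = g q₁ ∧ bitTest B i q₂ = g q₂ := by
  by_cases hg : g q₁ = g q₂
  · exact ⟨.inl (g q₁), rfl, hg⟩
  obtain ⟨j, hj⟩ : ∃ j, q₁.testBit j ≠ q₂.testBit j := by
    by_contra! h
    exact hg (congrArg g (Nat.eq_of_testBit_eq h))
  have hjB : j < B := by
    by_contra! hB
    have hpow : 2 ^ B ≤ 2 ^ j := Nat.pow_le_pow_right two_pos hB
    rw [Nat.testBit_eq_false_of_lt (h₁.trans_le hpow),
      Nat.testBit_eq_false_of_lt (h₂.trans_le hpow)] at hj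
    exact hj rfl
  refine ⟨.inr (⟨j, hjB⟩, q₁.testBit j ^^ g q₁), by simp [bitTest], ?_⟩
  simp only [bitTest]
  revert hj hg
  generalize q₁.testBit j = x₁; generalize q₂.testBit j = x₂
  generalize g q₁ = y₁; generalize g q₂ = y₂
  cases x₁ <;> cases x₂ <;> cases y₁ <;> cases y₂ <;> simp

namespace SimpleGraph

variable {V : Type*} {G : SimpleGraph V} {a b c e f u v w x : V} {t : ℕ}

def interval (G : SimpleGraph V) (u v : V) : Set V :=
  {w | G.dist u w + G.dist w v = G.dist u v}

theorem mem_interval : w ∈ G.interval u v ↔ G.dist u w + G.dist w v = G.dist u v :=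
  Iff.rfl

theorem left_mem_interval : u ∈ G.interval u v := by
  simp [interval]

theorem right_mem_interval : v ∈ G.interval u v := by
  simp [interval]

theorem interval_comm (u v : V) : G.interval u v = G.interval v u := by
  ext w
  simp only [mem_interval, dist_comm (u := w), dist_comm (v := u), add_comm]

theorem Connected.interval_subset_interval_left (hG : G.Connected) (hw : w ∈ G.interval u v) :
    G.interval w v ⊆ G.interval u v := by
  intro x hx
  simp only [mem_interval] at hw hx ⊢
  have := hG.dist_triangle (u := u) (v := w) (w := x)
  have := hG.dist_triangle (u := u) (v := x) (w := v)
  omega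

theorem Connected.interval_subset_interval_right (hG : G.Connected) (hw : w ∈ G.interval u v) :
    G.interval u w ⊆ G.interval u v := by
  rw [interval_comm] at hw
  rw [interval_comm u w, interval_comm u v]
  exact hG.interval_subset_interval_left hw

theorem Connected.eq_of_mem_interval_self (hG : G.Connected) (hw : w ∈ G.interval u u) :
    w = u :=
  (hG.dist_eq_zero_iff.1 (by simp only [mem_interval, dist_self] at hw; omega)).symm

theorem Connected.exists_mem_interval_dist_eq (hG : G.Connected) {t : ℕ}
    (ht : t ≤ G.dist u v) : ∃ w ∈ G.interval u v, G.dist u w = t := by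
  obtain ⟨p, -, hp⟩ := hG.exists_path_of_dist u v
  have htake := length_eq_dist_of_subwalk hp (p.isSubwalk_take t)
  have hdrop := length_eq_dist_of_subwalk hp (p.isSubwalk_drop t)
  rw [Walk.take_length, min_eq_left (hp ▸ ht)] at htake
  rw [Walk.drop_length] at hdrop
  refine ⟨p.getVert t, ?_, by omega⟩
  simp only [mem_interval]
  omega

namespace IsTree

variable (hT : G.IsTree)
include hT

theorem eq_of_isPath {p q : G.Walk u v} (hp : p.IsPath) (hq : q.IsPath) : p = q :=
  congrArg Subtype.val ((hT.isAcyclic.subsingleton_path u v).elim ⟨p, hp⟩ ⟨q, hq⟩)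

theorem length_eq_dist {p : G.Walk u v} (hp : p.IsPath) : p.length = G.dist u v := by
  obtain ⟨q, hq, hqd⟩ := hT.connected.exists_path_of_dist u v
  rw [← hqd, hT.eq_of_isPath hp hq]

theorem mem_support_iff_mem_interval {p : G.Walk u v} (hp : p.IsPath) :
    w ∈ p.support ↔ w ∈ G.interval u v := by
  classical
  constructor
  · intro hw
    have hsplit := congrArg Walk.length (p.take_spec hw)
    rw [Walk.length_append, hT.length_eq_dist (hp.takeUntil hw),
      hT.length_eq_dist (hp.dropUntil hw), hT.length_eq_dist hp] at hsplit
    exact hsplit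
  · intro hw
    obtain ⟨q₁, -, hq₁⟩ := hT.connected.exists_path_of_dist u w
    obtain ⟨q₂, -, hq₂⟩ := hT.connected.exists_path_of_dist w v
    have hq : (q₁.append q₂).IsPath := Walk.isPath_of_length_eq_dist _ (by
      rw [Walk.length_append, hq₁, hq₂]; exact hw)
    rw [hT.eq_of_isPath hp hq]
    exact (Walk.mem_support_append_iff _ _).2 (Or.inl q₁.end_mem_support)

theorem interval_subset_union (x : V) :
    G.interval u v ⊆ G.interval u x ∪ G.interval x v := by
  classical
  intro w hw
  obtain ⟨p, hp, -⟩ := hT.connected.exists_path_of_dist u x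
  obtain ⟨q, hq, -⟩ := hT.connected.exists_path_of_dist x v
  have := (p.append q).support_bypass_subset_support
    ((hT.mem_support_iff_mem_interval (p.append q).bypass_isPath).2 hw)
  rwa [Walk.mem_support_append_iff, hT.mem_support_iff_mem_interval hp,
    hT.mem_support_iff_mem_interval hq] at this

theorem eq_of_mem_interval (hw : w ∈ G.interval u v) (hx : x ∈ G.interval u v)
    (h : G.dist u w = G.dist u x) : w = x := by
  have hG := hT.connected
  rcases hT.interval_subset_union w hx with hx' | hx' <;>
    simp only [mem_interval] at hw hx hx'
  · exact (hG.dist_eq_zero_iff.1 (by omega)).symm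
  · exact hG.dist_eq_zero_iff.1 (by omega)

theorem dist_lt_of_mem_interval (he : e ∈ G.interval x a) (he' : e ∉ G.interval a b)
    (hw : w ∈ G.interval a b) : G.dist x e < G.dist x w := by
  have hG := hT.connected
  rcases hT.interval_subset_union w he with he'' | he''
  · have := hG.pos_dist_of_ne (u := e) (v := w) (by rintro rfl; exact he' hw)
    simp only [mem_interval] at he''
    omega
  · rw [interval_comm] at hw he'
    exact absurd (hG.interval_subset_interval_left hw he'') he'

theorem exists_degree_eq_one_mem_interval [Fintype V] [DecidableRel G.Adj] (he : e ≠ a) :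
    ∃ u, G.degree u = 1 ∧ e ∈ G.interval u a := by
  classical
  have hG := hT.connected
  -- the vertex behind `e` farthest from `a` is a leaf
  obtain ⟨u, hu, hmax⟩ := (univ.filter fun u => e ∈ G.interval u a).exists_max_image
    (G.dist · a) ⟨e, by simp [left_mem_interval]⟩
  simp only [mem_filter, mem_univ, true_and] at hu hmax
  refine ⟨u, ?_, hu⟩
  have hua : u ≠ a := by rintro rfl; exact he (hG.eq_of_mem_interval_self hu)
  have hnbr : ∀ n, G.Adj u n → n ∈ G.interval u a ∧ G.dist u n = 1 := by
    intro n hn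
    have h₁ : G.dist u n = 1 := dist_eq_one_iff_adj.2 hn
    have hau := dist_comm (G := G) (u := a) (v := u)
    have han := dist_comm (G := G) (u := a) (v := n)
    rw [mem_interval]
    rcases hT.dist_eq_dist_add_one_of_adj a hn with h | h
    · omega
    · have hun : u ∈ G.interval n a := by
        rw [mem_interval, dist_comm, h₁]
        omega
      have := hmax n (hG.interval_subset_interval_left hun hu)
      omega
  obtain ⟨n₀, hn₀, hd₀⟩ := hG.exists_mem_interval_dist_eq (u := u) (v := a) (t := 1)
    (hG.pos_dist_of_ne hua)
  rw [degree, card_eq_one]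
  refine ⟨n₀, eq_singleton_iff_unique_mem.2 ⟨?_, fun n hn => ?_⟩⟩
  · rwa [mem_neighborFinset, ← dist_eq_one_iff_adj]
  · obtain ⟨hn', hd⟩ := hnbr n ((mem_neighborFinset _ _ _).1 hn)
    exact hT.eq_of_mem_interval hn' hn₀ (hd.trans hd₀.symm)

end IsTree

/-- The vertex at depth `t` on the path from the root `c` to `v`; junk unless `t ≤ G.dist c v`. -/
noncomputable def ancestor (G : SimpleGraph V) (c : V) (t : ℕ) (v : V) : V :=
  @Classical.epsilon V ⟨v⟩ fun w => w ∈ G.interval c v ∧ G.dist c w = t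

noncomputable def parent (G : SimpleGraph V) (c v : V) : V :=
  G.ancestor c (G.dist c v - 1) v

namespace IsTree

variable (hT : G.IsTree)
include hT

theorem ancestor_spec (ht : t ≤ G.dist c v) :
    G.ancestor c t v ∈ G.interval c v ∧ G.dist c (G.ancestor c t v) = t :=
  Classical.epsilon_spec (hT.connected.exists_mem_interval_dist_eq ht)

theorem ancestor_eq (hw : w ∈ G.interval c v) : G.ancestor c (G.dist c w) v = w :=
  hT.eq_of_mem_interval (hT.ancestor_spec (by rw [mem_interval] at hw; omega)).1 hw
    (hT.ancestor_spec (by rw [mem_interval] at hw; omega)).2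

theorem ancestor_zero : G.ancestor c 0 v = c := by
  simpa using hT.ancestor_eq (c := c) (v := v) left_mem_interval

theorem ancestor_dist : G.ancestor c (G.dist c v) v = v :=
  hT.ancestor_eq right_mem_interval

theorem ancestor_of_mem_interval (hw : w ∈ G.interval c v) (ht : t ≤ G.dist c w) :
    G.ancestor c t w = G.ancestor c t v := by
  obtain ⟨h₁, h₂⟩ := hT.ancestor_spec ht
  have := hT.ancestor_eq (hT.connected.interval_subset_interval_right hw h₁)
  rw [h₂] at this
  exact this.symm

theorem ancestor_succ_ne (ht : t + 1 ≤ G.dist c v) : G.ancestor c (t + 1) v ≠ c := by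
  intro h
  have := (hT.ancestor_spec ht).2
  rw [h, dist_self] at this
  omega

theorem parent_adj (hv : v ≠ c) : G.Adj (G.parent c v) v := by
  have hpos := hT.connected.pos_dist_of_ne hv.symm
  obtain ⟨h₁, h₂⟩ := hT.ancestor_spec (c := c) (v := v) (t := G.dist c v - 1) (by omega)
  rw [mem_interval] at h₁
  rw [parent, ← dist_eq_one_iff_adj]
  omega

theorem parent_ancestor_succ (ht : t + 1 ≤ G.dist c v) :
    G.parent c (G.ancestor c (t + 1) v) = G.ancestor c t v := by
  obtain ⟨h₁, h₂⟩ := hT.ancestor_spec ht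
  rw [parent, h₂, Nat.add_sub_cancel]
  exact hT.ancestor_of_mem_interval h₁ (by omega)

end IsTree

def SeparatesIntervals {ι : Type*} (G : SimpleGraph V) (φ : ι → V → ℕ) : Prop :=
  ∀ a b e, e ∉ G.interval a b → ∃ i, ∀ w ∈ G.interval a b, φ i w < φ i e

variable [Fintype V] [DecidableRel G.Adj]

noncomputable def label (G : SimpleGraph V) [DecidableRel G.Adj] (c v : V) : ℕ :=
  #{w ∈ G.neighborFinset (G.parent c v) | Fintype.equivFin V w < Fintype.equivFin V v}

namespace IsTree

variable (hT : G.IsTree)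
include hT

theorem label_lt_maxDegree (hv : v ≠ c) : G.label c v < G.maxDegree :=
  (card_filter_lt_lt_card ((mem_neighborFinset _ _ _).2 (hT.parent_adj hv))).trans_le
    (G.degree_le_maxDegree _)

theorem eq_of_label_eq (hu : u ≠ c) (hv : v ≠ c) (hp : G.parent c u = G.parent c v)
    (hl : G.label c u = G.label c v) : u = v := by
  have hlt : ∀ {u v}, u ≠ c → G.parent c u = G.parent c v →
      Fintype.equivFin V u < Fintype.equivFin V v → G.label c u < G.label c v := by
    intro u v hu hp h
    rw [label, label, hp]
    exact card_filter_lt_lt_card_filter_lt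
      ((mem_neighborFinset _ _ _).2 (hp ▸ hT.parent_adj hu)) h
  rcases lt_trichotomy (Fintype.equivFin V u) (Fintype.equivFin V v) with h | h | h
  · exact absurd hl (hlt hu hp h).ne
  · exact (Fintype.equivFin V).injective h
  · exact absurd hl (hlt hv hp.symm h).ne'

theorem mem_interval_of_label_eq
    (h : ∀ t < G.dist c e, t < G.dist c f ∧
      G.label c (G.ancestor c (t + 1) e) = G.label c (G.ancestor c (t + 1) f)) :
    e ∈ G.interval c f := by
  have hanc : ∀ t ≤ G.dist c e, G.ancestor c t e = G.ancestor c t f := by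
    intro t ht
    induction t with
    | zero => rw [hT.ancestor_zero, hT.ancestor_zero]
    | succ t ih =>
      obtain ⟨htf, hl⟩ := h t ht
      refine hT.eq_of_label_eq (hT.ancestor_succ_ne ht) (hT.ancestor_succ_ne htf) ?_ hl
      rw [hT.parent_ancestor_succ ht, hT.parent_ancestor_succ htf, ih (by omega)]
  have hef : G.dist c e ≤ G.dist c f := by
    rcases Nat.eq_zero_or_pos (G.dist c e) with h0 | h0
    · omega
    · have := (h _ (Nat.sub_lt h0 one_pos)).1
      omega
  rw [← hT.ancestor_dist (c := c) (v := e), hanc _ le_rfl]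
  exact (hT.ancestor_spec hef).1

end IsTree

variable {m j q : ℕ} {bit : Bool}

/-- Bit `j` of the label of the ancestor of `v` at depth `t + 1` is the letter at `m * t + j`. -/
noncomputable def code (G : SimpleGraph V) [DecidableRel G.Adj] (c : V) (m : ℕ) (v : V)
    (q : ℕ) : Option Bool :=
  if q / m < G.dist c v then some ((G.label c (G.ancestor c (q / m + 1) v)).testBit (q % m))
  else none

theorem code_mul_add (hj : j < m) :
    G.code c m v (m * t + j) =
      if t < G.dist c v then some ((G.label c (G.ancestor c (t + 1) v)).testBit j) else none := by
  rw [code, Nat.mul_add_div (by omega), Nat.div_eq_of_lt hj, add_zero, Nat.mul_add_mod,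
    Nat.mod_eq_of_lt hj]

theorem code_ne_none_iff (hm : 0 < m) : G.code c m v q ≠ none ↔ q < m * G.dist c v := by
  rw [code, mul_comm, ← Nat.div_lt_iff_lt_mul hm]
  split_ifs with h <;> simp [h]

namespace IsTree

variable (hT : G.IsTree)
include hT

theorem code_eq_some_of_mem_interval (hw : w ∈ G.interval c v) (h : G.code c m w q = some bit) :
    G.code c m v q = some bit := by
  unfold code at h ⊢
  split_ifs at h with hq
  rw [mem_interval] at hw
  rw [if_pos (by omega), ← hT.ancestor_of_mem_interval hw (by omega)]
  exact h

variable (hm : 0 < m) (hlabel : ∀ v ≠ c, G.label c v < 2 ^ m)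
include hm hlabel

theorem mem_interval_of_code_eq (h : ∀ q < m * G.dist c e, G.code c m e q = G.code c m f q) :
    e ∈ G.interval c f := by
  refine hT.mem_interval_of_label_eq fun t ht => ?_
  have hcode : ∀ j < m, G.code c m e (m * t + j) = G.code c m f (m * t + j) :=
    fun j hj => h _ (by nlinarith)
  have htf : t < G.dist c f := by
    have := hcode 0 hm
    rw [code_mul_add hm, code_mul_add hm, if_pos ht] at this
    by_contra htf
    rw [if_neg htf] at this
    exact Option.some_ne_none _ this
  refine ⟨htf, Nat.eq_of_testBit_eq fun j => ?_⟩
  by_cases hj : j < m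
  · have := hcode j hj
    rw [code_mul_add hj, code_mul_add hj, if_pos ht, if_pos htf] at this
    exact Option.some_injective _ this
  · have hpow : 2 ^ m ≤ 2 ^ j := Nat.pow_le_pow_right two_pos (by omega)
    rw [Nat.testBit_eq_false_of_lt ((hlabel _ (hT.ancestor_succ_ne ht)).trans_le hpow),
      Nat.testBit_eq_false_of_lt ((hlabel _ (hT.ancestor_succ_ne htf)).trans_le hpow)]

/-- If `e` is not an ancestor of `f`, the first difference of their codes is a letter of `e`. -/
theorem exists_first_diff_code (he : e ∉ G.interval c f) :
    ∃ q < m * G.dist c e, (∀ p < q, G.code c m f p = G.code c m e p) ∧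
      G.code c m e q = some ((G.code c m e q).getD false) ∧
      G.code c m f q ≠ some ((G.code c m e q).getD false) := by
  classical
  have hex : ∃ q, G.code c m e q ≠ G.code c m f q := by
    by_contra! h
    exact he (hT.mem_interval_of_code_eq hm hlabel fun q _ => h q)
  have hmin : ∀ p < Nat.find hex, G.code c m e p = G.code c m f p :=
    fun p hp => not_not.1 (Nat.find_min hex hp)
  have hlt : Nat.find hex < m * G.dist c e := by
    by_contra! hge
    exact he (hT.mem_interval_of_code_eq hm hlabel fun q hq => hmin q (by omega))
  obtain ⟨b, hb⟩ := Option.ne_none_iff_exists'.1 ((code_ne_none_iff hm).2 hlt)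
  refine ⟨Nat.find hex, hlt, fun p hp => (hmin p hp).symm, by simp [hb], ?_⟩
  rw [hb]
  exact fun h => Nat.find_spec hex (hb.trans h.symm)

end IsTree

noncomputable def depthCodeWeight (G : SimpleGraph V) [DecidableRel G.Adj] (c : V) (m B : ℕ) :
    Option (Bool ⊕ Fin B × Bool) → V → ℕ
  | none => rank fun v => OrderDual.toDual (G.dist c v)
  | some i => rank fun v => score (bitTest B i) (G.code c m v)

namespace IsTree

variable (hT : G.IsTree)
include hT

theorem one_lt_card_degree_eq_one (hΔ : 2 ≤ G.maxDegree) : 1 < #{v | G.degree v = 1} := by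
  have : Nonempty V := hT.connected.nonempty
  obtain ⟨v, hv⟩ := G.exists_maximal_degree_vertex
  obtain ⟨w, hvw⟩ := (G.degree_pos_iff_exists_adj v).1 (by omega)
  have : Nontrivial V := ⟨v, w, hvw.ne⟩
  obtain ⟨u₁, u₂, hne, hu₁, hu₂⟩ := hT.exists_ne_and_degree_eq_one
  exact one_lt_card.2 ⟨u₁, by simpa using hu₁, u₂, by simpa using hu₂, hne⟩

theorem separatesIntervals_leaves :
    G.SeparatesIntervals fun u : {u // G.degree u = 1} =>
      rank fun v => OrderDual.toDual (G.dist u v) := by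
  intro a b e he
  obtain ⟨u, hu, heu⟩ :=
    hT.exists_degree_eq_one_mem_interval (e := e) (a := a)
      (by rintro rfl; exact he left_mem_interval)
  exact ⟨⟨u, hu⟩, fun w hw => rank_lt_rank_iff.2 (hT.dist_lt_of_mem_interval heu he hw)⟩

theorem separatesIntervals_depthCodeWeight {c : V} {m r B : ℕ} (hm : 0 < m)
    (hlabel : ∀ v ≠ c, G.label c v < 2 ^ m) (hr : ∀ v, G.dist c v ≤ r)
    (hB : m * r ≤ 2 ^ B) :
    G.SeparatesIntervals (G.depthCodeWeight c m B) := by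
  intro a b e he
  by_cases hanc : e ∈ G.interval c a ∨ e ∈ G.interval c b
  · refine ⟨none, fun w hw => rank_lt_rank_iff.2 ?_⟩
    rcases hanc with h | h
    · exact hT.dist_lt_of_mem_interval h he hw
    · rw [interval_comm] at he hw
      exact hT.dist_lt_of_mem_interval h he hw
  rw [not_or] at hanc
  obtain ⟨qa, hqa, hpa, hea, hfa⟩ := hT.exists_first_diff_code hm hlabel hanc.1
  obtain ⟨qb, hqb, hpb, heb, hfb⟩ := hT.exists_first_diff_code hm hlabel hanc.2
  have hbound : ∀ q < m * G.dist c e, q < 2 ^ B :=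
    fun q hq => hq.trans_le ((Nat.mul_le_mul_left m (hr e)).trans hB)
  obtain ⟨i, hia, hib⟩ :=
    exists_bitTest_eq (fun q => (G.code c m e q).getD false) (hbound _ hqa) (hbound _ hqb)
  -- every vertex of the interval lies below `a` or below `b`, and those are outscored by `e`
  refine ⟨some i, fun w hw => rank_lt_rank_iff.2 ?_⟩
  rcases hT.interval_subset_union c hw with hw' | hw'
  · rw [interval_comm] at hw'
    refine (score_le_score fun q b => hT.code_eq_some_of_mem_interval hw').trans_lt ?_
    exact score_lt_score hpa (hia ▸ hea) (hia ▸ hfa)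
  · refine (score_le_score fun q b => hT.code_eq_some_of_mem_interval hw').trans_lt ?_
    exact score_lt_score hpb (hib ▸ heb) (hib ▸ hfb)

end IsTree

end SimpleGraph

theorem exists_forall_dist_le_graphRadius {V : Type*} [Finite V] [Nonempty V]
    (G : SimpleGraph V) : ∃ c, ∀ v, G.dist c v ≤ graphRadius G := by
  obtain ⟨N, hN⟩ := (Set.finite_range (G.dist (Classical.arbitrary V))).bddAbove
  exact Nat.sInf_mem (s := {e | ∃ c, ∀ v, G.dist c v ≤ e})
    ⟨N, Classical.arbitrary V, fun v => hN ⟨v, rfl⟩⟩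

namespace GraphCPTModel

variable {V X : Type*} {G : SimpleGraph V} [PartialOrder X] {M : X → Set V}

theorem exists_eq_interval (hT : G.IsTree) (hM : GraphCPTModel G M) (x : X) :
    ∃ a b, M x = G.interval a b := by
  obtain ⟨a, b, p, hp, hMx⟩ := hM.1 x
  exact ⟨a, b, hMx.trans (Set.ext fun _ => hT.mem_support_iff_mem_interval hp)⟩

theorem dimLE_card [Finite V] {ι : Type*} [Fintype ι] (hT : G.IsTree) (hM : GraphCPTModel G M)
    {φ : ι → V → ℕ} (hφ : G.SeparatesIntervals φ) (hι : 2 ≤ Fintype.card ι) :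
    DimLE X (Fintype.card ι) := by
  let ψ : Fin (Fintype.card ι) → V → ℕ := fun i => φ ((Fintype.equivFin ι).symm i)
  refine dimLE_of_separating hM.2 hι (f := fun i S => sSup (ψ i '' S))
    (fun i S T hST => csSup_le_csSup' (Set.toFinite _).bddAbove (Set.image_mono hST)) ?_
  intro x y hxy
  obtain ⟨e, hex, hey⟩ := Set.not_subset.1 hxy
  obtain ⟨a, b, hMy⟩ := hM.exists_eq_interval hT y
  rw [hMy] at hey ⊢
  obtain ⟨i, hi⟩ := hφ a b e hey
  refine ⟨Fintype.equivFin ι i, ?_⟩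
  calc sSup (ψ (Fintype.equivFin ι i) '' G.interval a b)
      < ψ (Fintype.equivFin ι i) e := by
        refine ((Set.toFinite _).csSup_lt_iff
          ⟨_, Set.mem_image_of_mem _ SimpleGraph.left_mem_interval⟩).2 ?_
        rintro _ ⟨w, hw, rfl⟩
        simpa [ψ] using hi w hw
    _ ≤ sSup (ψ (Fintype.equivFin ι i) '' M x) :=
        le_csSup (Set.toFinite _).bddAbove (Set.mem_image_of_mem _ hex)

variable [Fintype V] [DecidableRel G.Adj]

theorem dimLE_card_degree_eq_one (hT : G.IsTree) (hM : GraphCPTModel G M)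
    (hΔ : 2 ≤ G.maxDegree) : DimLE X #{v | G.degree v = 1} := by
  rw [← Fintype.card_subtype]
  exact hM.dimLE_card hT hT.separatesIntervals_leaves
    (by rw [Fintype.card_subtype]; exact hT.one_lt_card_degree_eq_one hΔ)

theorem dimLE_clog (hT : G.IsTree) (hM : GraphCPTModel G M) {c : V} {r : ℕ}
    (hr : ∀ v, G.dist c v ≤ r) (hΔ : 2 ≤ G.maxDegree) :
    DimLE X (2 * Nat.clog 2 (Nat.clog 2 G.maxDegree) + 2 * Nat.clog 2 r + 3) := by
  set m := Nat.clog 2 G.maxDegree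
  have hm : 0 < m := Nat.clog_pos one_lt_two hΔ
  have hlabel : ∀ v ≠ c, G.label c v < 2 ^ m :=
    fun v hv => (hT.label_lt_maxDegree hv).trans_le (Nat.le_pow_clog one_lt_two _)
  have hB : m * r ≤ 2 ^ (Nat.clog 2 m + Nat.clog 2 r) := by
    rw [pow_add]
    exact Nat.mul_le_mul (Nat.le_pow_clog one_lt_two _) (Nat.le_pow_clog one_lt_two _)
  have hcard : Fintype.card (Option (Bool ⊕ Fin (Nat.clog 2 m + Nat.clog 2 r) × Bool)) =
      2 * Nat.clog 2 m + 2 * Nat.clog 2 r + 3 := by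
    simp only [Fintype.card_option, Fintype.card_sum, Fintype.card_bool, Fintype.card_prod,
      Fintype.card_fin]
    ring
  rw [← hcard]
  exact hM.dimLE_card hT (hT.separatesIntervals_depthCodeWeight hm hlabel hr hB) (by omega)

end GraphCPTModel

theorem dim_CPT_poset_min_general {V : Type} [Fintype V]
    (G : SimpleGraph V) [DecidableRel G.Adj] (hT : G.IsTree)
    (Δ r l : ℕ) (hΔ : 2 ≤ Δ)
    (hdeg : G.maxDegree = Δ) (hrad : graphRadius G = r)
    (hl : (Finset.univ.filter fun v => G.degree v = 1).card ≤ l)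
    {X : Type} [PartialOrder X] (M : X → Set V) (hM : GraphCPTModel G M) :
    DimLE X (min l (2 * Nat.clog 2 (Nat.clog 2 Δ) + 2 * Nat.clog 2 r + 3)) := by
  subst hdeg hrad
  have : Nonempty V := hT.connected.nonempty
  obtain ⟨c, hc⟩ := exists_forall_dist_le_graphRadius G
  rw [min_def]
  split_ifs
  · exact (hM.dimLE_card_degree_eq_one hT hΔ).mono
      (zero_lt_one.trans (hT.one_lt_card_degree_eq_one hΔ)) hl
  · exact hM.dimLE_clog hT hc hΔ

/-- If a poset admits a containment model by paths in a host tree of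
maximum degree `Δ ≥ 2`, radius `r ≥ 1` and at most `l` leaves, then its dimension is at
most `min(l, 2⌈log₂ log₂ Δ⌉ + 2⌈log₂ r⌉ + 3)`. -/
theorem dim_CPT_poset_min {V : Type} [Fintype V] [DecidableEq V]
    (G : SimpleGraph V) [DecidableRel G.Adj] (hT : G.IsTree)
    (Δ r l : ℕ) (hΔ : 2 ≤ Δ) (hr : 1 ≤ r)
    (hdeg : G.maxDegree = Δ) (hrad : graphRadius G = r)
    (hl : (Finset.univ.filter fun v => G.degree v = 1).card ≤ l)
    {X : Type} [PartialOrder X] (M : X → Set V) (hM : GraphCPTModel G M) :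
    DimLE X (min l (2 * Nat.clog 2 (Nat.clog 2 Δ) + 2 * Nat.clog 2 r + 3)) :=
  dim_CPT_poset_min_general G hT Δ r l hΔ hdeg hrad hl M hM
end

section
/- Every poset P whose elements are mapped to intervals of the real line such that for distinct x, y: x ⪯ y iff the interval of x is properly contained in the interval of y, has dimension at most 2. -/
/-- Lexicographic comparison by two real keys, with a strict total order `r` as tie-break. -/
private def lex3 {X : Type*} (k1 k2 : X → ℝ) (r : X → X → Prop) (x y : X) : Prop :=
  k1 x < k1 y ∨ (k1 x = k1 y ∧ (k2 x < k2 y ∨ (k2 x = k2 y ∧ (r x y ∨ x = y))))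

private lemma lex3_isLinear {X : Type*} (k1 k2 : X → ℝ) (r : X → X → Prop)
    (htri : ∀ a b, r a b ∨ a = b ∨ r b a)
    (hirr : ∀ a, ¬ r a a)
    (htr : ∀ a b c, r a b → r b c → r a c) :
    IsLinearOrderRel (lex3 k1 k2 r) := by
  have hasymm : ∀ a b, r a b → r b a → False := fun a b h1 h2 => hirr a (htr a b a h1 h2)
  refine ⟨fun a => Or.inr ⟨rfl, Or.inr ⟨rfl, Or.inr rfl⟩⟩, ?_, ?_, ?_⟩
  · rintro a b (h1 | ⟨e1, h1 | ⟨e1', h1⟩⟩) (h2 | ⟨e2, h2 | ⟨e2', h2⟩⟩) <;>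
      first
        | linarith
        | (rcases h1 with h1 | rfl <;> rcases h2 with h2 | h2 <;>
            first | rfl | exact absurd h2 (hirr _) | exact absurd (hasymm _ _ h1 h2) id
                  | exact h2.symm)
  · rintro a b c (h1 | ⟨e1, h1 | ⟨e1', h1⟩⟩) (h2 | ⟨e2, h2 | ⟨e2', h2⟩⟩) <;>
      first
        | exact Or.inl (by linarith)
        | exact Or.inr ⟨by linarith, Or.inl (by linarith)⟩
        | (refine Or.inr ⟨by linarith, Or.inr ⟨by linarith, ?_⟩⟩
           rcases h1 with h1 | rfl
           · rcases h2 with h2 | rfl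
             · exact Or.inl (htr _ _ _ h1 h2)
             · exact Or.inl h1
           · exact h2)
  · intro a b
    rcases lt_trichotomy (k1 a) (k1 b) with h | h | h
    · exact Or.inl (Or.inl h)
    · rcases lt_trichotomy (k2 a) (k2 b) with h2 | h2 | h2
      · exact Or.inl (Or.inr ⟨h, Or.inl h2⟩)
      · rcases htri a b with h3 | h3 | h3
        · exact Or.inl (Or.inr ⟨h, Or.inr ⟨h2, Or.inl h3⟩⟩)
        · exact Or.inl (Or.inr ⟨h, Or.inr ⟨h2, Or.inr h3⟩⟩)
        · exact Or.inr (Or.inr ⟨h.symm, Or.inr ⟨h2.symm, Or.inl h3⟩⟩)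
      · exact Or.inr (Or.inr ⟨h.symm, Or.inl h2⟩)
    · exact Or.inr (Or.inl h)

/-- A poset whose elements are assigned closed real intervals such that
for distinct `x, y`: `x ⪯ y` iff the interval of `x` is properly contained in the interval
of `y`, has dimension at most 2 (Dushnik–Miller). -/
theorem interval_containment_dim_le_two {X : Type} [PartialOrder X]
    (I : X → Set ℝ)
    (hI : ∀ x, ∃ a b : ℝ, a ≤ b ∧ I x = Set.Icc a b)
    (hcont : ∀ x y : X, x ≠ y → (x ≤ y ↔ I x ⊂ I y)) :
    DimLE X 2 := by
  classical
  choose lo hi hle hIcc using hI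
  set r : X → X → Prop := WellOrderingRel with hr
  have htri : ∀ a b : X, r a b ∨ a = b ∨ r b a := fun a b =>
    trichotomous_of WellOrderingRel a b
  have hirr : ∀ a : X, ¬ r a a := fun a => irrefl_of WellOrderingRel a
  have htr : ∀ a b c : X, r a b → r b c → r a c := fun a b c =>
    trans_of WellOrderingRel
  have hsub : ∀ x y : X, I x ⊆ I y ↔ lo y ≤ lo x ∧ hi x ≤ hi y := by
    intro x y
    rw [hIcc x, hIcc y, Set.Icc_subset_Icc_iff (hle x)]
  have heqend : ∀ x y : X, lo x = lo y → hi x = hi y → I x = I y := by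
    intro x y e1 e2; rw [hIcc x, hIcc y, e1, e2]
  let L1 := lex3 (fun x => -(lo x)) hi r
  let L2 := lex3 hi (fun x => -(lo x)) (fun x y => r y x)
  refine ⟨fun i => if i = 0 then L1 else L2, ?_, ?_⟩
  · intro i
    dsimp only
    split
    · exact lex3_isLinear _ _ _ htri hirr htr
    · exact lex3_isLinear _ _ _ (fun a b => by rcases htri a b with h | h | h <;> tauto)
        hirr (fun a b c h1 h2 => htr c b a h2 h1)
  · intro x y
    constructor
    · intro hxy i
      rcases eq_or_ne x y with rfl | hne
      · split
        · exact Or.inr ⟨rfl, Or.inr ⟨rfl, Or.inr rfl⟩⟩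
        · exact Or.inr ⟨rfl, Or.inr ⟨rfl, Or.inr rfl⟩⟩
      · have hss : I x ⊂ I y := (hcont x y hne).1 hxy
        obtain ⟨h1, h2⟩ := (hsub x y).1 hss.subset
        have hnotboth : ¬ (lo x = lo y ∧ hi x = hi y) := by
          rintro ⟨e1, e2⟩
          exact hss.ne (heqend x y e1 e2)
        split
        · -- L1
          rcases lt_or_eq_of_le h1 with h | h
          · exact Or.inl (by dsimp only; linarith)
          · refine Or.inr ⟨by dsimp only; rw [h], Or.inl ?_⟩
            exact lt_of_le_of_ne h2 (fun e => hnotboth ⟨h.symm, e⟩)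
        · -- L2
          rcases lt_or_eq_of_le h2 with h | h
          · exact Or.inl h
          · refine Or.inr ⟨h, Or.inl ?_⟩
            have : lo y < lo x := lt_of_le_of_ne h1 (fun e => hnotboth ⟨e.symm, h⟩)
            dsimp only; linarith
    · intro hL
      have hf : L1 x y := by simpa using hL 0
      have hg : L2 x y := by simpa using hL 1
      rcases eq_or_ne x y with rfl | hne
      · exact le_rfl
      · have h1 : lo y ≤ lo x := by
          rcases hf with h | ⟨h, _⟩ <;> dsimp only at h <;> linarith
        have h2 : hi x ≤ hi y := by
          rcases hg with h | ⟨h, _⟩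
          · exact le_of_lt h
          · exact le_of_eq h
        have hsubxy : I x ⊆ I y := (hsub x y).2 ⟨h1, h2⟩
        have hIne : I x ≠ I y := by
          intro he
          have e1 : lo x = lo y := by
            have h1' : lo x ≤ lo y := ((hsub y x).1 (le_of_eq he.symm)).1
            exact le_antisymm h1' h1
          have e2 : hi x = hi y := by
            have h2' : hi y ≤ hi x := ((hsub y x).1 (le_of_eq he.symm)).2
            exact le_antisymm h2 h2'
          -- both tie-breaks fire, in opposite directions
          have hrxy : r x y := by
            rcases hf with h | ⟨_, h | ⟨_, h | h⟩⟩
            · dsimp only at h; linarith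
            · linarith
            · exact h
            · exact absurd h hne
          have hryx : r y x := by
            rcases hg with h | ⟨_, h | ⟨_, h | h⟩⟩
            · linarith
            · dsimp only at h; linarith
            · exact h
            · exact absurd h hne
          exact hirr x (htr x y x hrxy hryx)
        exact (hcont x y hne).2 ⟨hsubxy, fun h => hIne (le_antisymm hsubxy h)⟩
end
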